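/- arXiv:2407.15547 — 2 statements merged into one kernel-verified Lean document; each statement's English description precedes it below -/
import Mathlib

section
/- Let α < 0, r > 0, and let τ be a Schwartz function on ℝ supported in [0,∞) such that L{τ;·} has an analytic extension F to an open neighborhood of R̄_{α',r'} for some α' < α and r' > r. For h > 0 set τ_h(x) = e^{-hx}τ(x); then L{τ_h;s} has the analytic extension F_h(s) = F(s+h) near R̄_{α,r} for 0 < h < α − α', and ‖τ_h − τ‖_{α,r} := sup_{x≥0}|τ_h'(x) − τ'(x)| + sup_{s∈R̄_{α,r}}|F(s+h) − F(s)| → 0 as h → 0⁺. -/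
open Filter Set MeasureTheory

noncomputable def Laplace (f : ℝ → ℂ) (s : ℂ) : ℂ :=
  ∫ x in Set.Ioi (0 : ℝ), f x * Complex.exp (-(s * (x : ℂ)))

def Rbar (α r : ℝ) : Set ℂ := {s : ℂ | α ≤ s.re ∧ s.re ≤ 1 ∧ |s.im| ≤ r}

open Complex Topology

/-! Since `L{τ_h; s} = L{τ; s + h}`, the function `F(· + h)` extends `L{τ_h; ·}`.
From `|e^{-hx} - 1| ≤ hx` one gets `|τ_h'(x) - τ'(x)| ≤ h (|τ(x)| + x |τ'(x)|)`, which is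
`O(h)` uniformly in `x ≥ 0` because `τ` is Schwartz. Finally `F(s + h) - F(s) → 0` uniformly
on `R̄_{α,r}` since `F` is uniformly continuous on the compact rectangle `[α, 2] × [-r, r]`,
which lies in `U ∪ {Re s > 0}`. -/

theorem Laplace_cexp_neg_mul_mul (f : ℝ → ℂ) (h s : ℂ) :
    Laplace (fun x : ℝ => cexp (-(h * x)) * f x) s = Laplace f (s + h) := by
  refine setIntegral_congr_fun measurableSet_Ioi fun x _ => ?_
  rw [show -((s + h) * (x : ℂ)) = -(h * x) + -(s * x) by ring, Complex.exp_add]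
  ring

theorem Rbar_eq_reProdIm (α r : ℝ) : Rbar α r = Icc α 1 ×ℂ Icc (-r) r := by
  ext s
  simp only [Rbar, mem_ofPred_eq, mem_reProdIm, mem_Icc, abs_le]
  tauto

theorem Ici_reProdIm_subset_Rbar_union {α α' r r' : ℝ} (hα : α' ≤ α) (hr : r ≤ r') :
    Ici α ×ℂ Icc (-r) r ⊆ Rbar α' r' ∪ {z : ℂ | 0 < z.re} := by
  intro z ⟨hre, him⟩
  rcases le_or_gt z.re 1 with h1 | h1
  · left
    rw [Rbar_eq_reProdIm]
    exact ⟨⟨hα.trans hre, h1⟩, ⟨by linarith [him.1], him.2.trans hr⟩⟩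
  · exact Or.inr (by simp only [mem_ofPred_eq]; linarith)

theorem add_ofReal_mem_reProdIm {α r h b : ℝ} {s : ℂ} (hs : s ∈ Rbar α r) (hh : 0 ≤ h)
    (hb : 1 + h ≤ b) : s + h ∈ Icc α b ×ℂ Icc (-r) r := by
  rw [Rbar_eq_reProdIm] at hs
  obtain ⟨⟨hα, h1⟩, him⟩ := hs
  simp only [mem_reProdIm, mem_Icc, add_re, add_im, ofReal_re, ofReal_im, add_zero]
  exact ⟨⟨by linarith, by linarith⟩, him⟩

theorem eventually_norm_comp_add_ofReal_sub_le {F : ℂ → ℂ} {α r ε : ℝ}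
    (hF : ContinuousOn F (Icc α 2 ×ℂ Icc (-r) r)) (hε : 0 < ε) :
    ∀ᶠ h : ℝ in 𝓝[>] 0, ∀ s ∈ Rbar α r, ‖F (s + (h : ℂ)) - F s‖ ≤ ε := by
  have hK : IsCompact (Icc α 2 ×ℂ Icc (-r) r) := isCompact_Icc.reProdIm isCompact_Icc
  obtain ⟨δ, hδ, hF⟩ := Metric.uniformContinuousOn_iff.1
    (hK.uniformContinuousOn_of_continuous hF) ε hε
  filter_upwards [Ioo_mem_nhdsGT (lt_min hδ one_pos)] with h ⟨hpos, hlt⟩ s hs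
  have hsh : dist (s + h) s < δ := by
    rw [dist_eq, add_sub_cancel_left, norm_real, Real.norm_of_nonneg hpos.le]
    exact hlt.trans_le (min_le_left _ _)
  have hsK : s ∈ Icc α 2 ×ℂ Icc (-r) r := by
    rw [Rbar_eq_reProdIm] at hs
    exact ⟨⟨hs.1.1, hs.1.2.trans one_le_two⟩, hs.2⟩
  have hshK : s + h ∈ Icc α 2 ×ℂ Icc (-r) r :=
    add_ofReal_mem_reProdIm hs hpos.le (by linarith [hlt.trans_le (min_le_right δ 1)])
  rw [← dist_eq]
  exact (hF _ hshK _ hsK hsh).le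

theorem hasDerivAt_cexp_neg_mul_mul {f : ℝ → ℂ} {f' : ℂ} {x : ℝ} (hf : HasDerivAt f f' x)
    (h : ℂ) :
    HasDerivAt (fun y : ℝ => cexp (-(h * y)) * f y)
      (cexp (-(h * x)) * -h * f x + cexp (-(h * x)) * f') x := by
  have hexp : HasDerivAt (fun z : ℂ => cexp (-(h * z))) (cexp (-(h * x)) * -h) x := by
    simpa using (((hasDerivAt_id (x : ℂ)).const_mul h).neg).cexp
  exact hexp.comp_ofReal.mul hf

theorem norm_cexp_neg_mul_sub_one_le {h x : ℝ} (hh : 0 ≤ h) (hx : 0 ≤ x) :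
    ‖cexp (-(h * x)) - 1‖ ≤ h * x := by
  rw [← ofReal_mul, ← ofReal_neg, ← ofReal_exp, ← ofReal_one, ← ofReal_sub, norm_real,
    Real.norm_of_nonpos (by simpa using mul_nonneg hh hx)]
  linarith [Real.add_one_le_exp (-(h * x))]

theorem norm_deriv_cexp_neg_mul_mul_sub_le {f : ℝ → ℂ} {h x : ℝ} (hf : DifferentiableAt ℝ f x)
    (hh : 0 ≤ h) (hx : 0 ≤ x) :
    ‖deriv (fun y : ℝ => cexp (-(h * y)) * f y) x - deriv f x‖
      ≤ h * (‖f x‖ + x * ‖deriv f x‖) := by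
  rw [(hasDerivAt_cexp_neg_mul_mul hf.hasDerivAt h).deriv]
  set E := cexp (-(h * x))
  have hE : ‖E‖ ≤ 1 := by
    rw [norm_exp, Real.exp_le_one_iff]
    simpa using mul_nonneg hh hx
  calc ‖E * -h * f x + E * deriv f x - deriv f x‖
      = ‖E * -h * f x + (E - 1) * deriv f x‖ := by ring_nf
    _ ≤ ‖E‖ * h * ‖f x‖ + ‖E - 1‖ * ‖deriv f x‖ := by
      simpa [abs_of_nonneg hh] using norm_add_le (E * -h * f x) ((E - 1) * deriv f x)
    _ ≤ 1 * h * ‖f x‖ + (h * x) * ‖deriv f x‖ := by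
      gcongr
      exact norm_cexp_neg_mul_sub_one_le hh hx
    _ = h * (‖f x‖ + x * ‖deriv f x‖) := by ring

theorem SchwartzMap.norm_add_abs_mul_norm_deriv_le {E : Type*} [NormedAddCommGroup E]
    [NormedSpace ℝ E] (τ : SchwartzMap ℝ E) (x : ℝ) :
    ‖τ x‖ + |x| * ‖deriv τ x‖ ≤ SchwartzMap.seminorm ℝ 0 0 τ + SchwartzMap.seminorm ℝ 1 1 τ := by
  have h1 := le_seminorm' ℝ 1 1 τ x
  rw [pow_one, iteratedDeriv_one] at h1
  exact add_le_add (norm_le_seminorm ℝ τ x) h1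

theorem SchwartzMap.eventually_norm_deriv_cexp_neg_mul_mul_sub_le (τ : SchwartzMap ℝ ℂ) {ε : ℝ}
    (hε : 0 < ε) :
    ∀ᶠ h : ℝ in 𝓝[>] 0, ∀ x : ℝ, 0 ≤ x →
      ‖deriv (fun y : ℝ => cexp (-((h : ℂ) * y)) * τ y) x - deriv τ x‖ ≤ ε := by
  set C := SchwartzMap.seminorm ℝ 0 0 τ + SchwartzMap.seminorm ℝ 1 1 τ
  have hC : Tendsto (fun h : ℝ => h * C) (𝓝[>] 0) (𝓝 0) := by
    simpa using ((continuous_mul_const C).tendsto 0).mono_left nhdsWithin_le_nhds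
  filter_upwards [hC.eventually (ge_mem_nhds hε), self_mem_nhdsWithin] with h hhC hpos x hx
  calc _ ≤ h * (‖τ x‖ + x * ‖deriv τ x‖) :=
        norm_deriv_cexp_neg_mul_mul_sub_le τ.differentiableAt hpos.le hx
    _ ≤ h * C := mul_le_mul_of_nonneg_left
        (by simpa [abs_of_nonneg hx] using τ.norm_add_abs_mul_norm_deriv_le x) hpos.le
    _ ≤ ε := hhC

theorem exponential_shift_approximation_general
    (α r α' r' : ℝ) (hα' : α' < α) (hr' : r < r')
    (τ : SchwartzMap ℝ ℂ)
    (U : Set ℂ) (hUR : Rbar α' r' ⊆ U)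
    (F : ℂ → ℂ)
    (hFan : DifferentiableOn ℂ F (U ∪ {s : ℂ | 0 < s.re}))
    (hFeq : ∀ s : ℂ, 0 < s.re → F s = Laplace (⇑τ) s) :
    -- (a) `F(·+h)` is an analytic extension of `L{τ_h;·}` near `R̄_{α,r}`
    (∀ h : ℝ, 0 < h → h < α - α' →
      Rbar α r ⊆ {s : ℂ | s + (h : ℂ) ∈ U ∪ {z : ℂ | 0 < z.re}} ∧
      DifferentiableOn ℂ (fun s : ℂ => F (s + (h : ℂ)))
        {s : ℂ | s + (h : ℂ) ∈ U ∪ {z : ℂ | 0 < z.re}} ∧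
      (∀ s : ℂ, 0 < s.re →
        F (s + (h : ℂ)) =
          Laplace (fun x : ℝ => Complex.exp (-((h : ℂ) * (x : ℂ))) * τ x) s)) ∧
    -- (b) `‖τ_h − τ‖_{α,r} → 0` as `h → 0⁺`
    (∀ ε : ℝ, 0 < ε → ∃ h₀ : ℝ, 0 < h₀ ∧ ∀ h : ℝ, 0 < h → h < h₀ →
      ∃ ε₁ ε₂ : ℝ, 0 ≤ ε₁ ∧ 0 ≤ ε₂ ∧ ε₁ + ε₂ < ε ∧
        (∀ x : ℝ, 0 ≤ x →
          ‖deriv (fun y : ℝ => Complex.exp (-((h : ℂ) * (y : ℂ))) * τ y) x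
            - deriv (⇑τ) x‖ ≤ ε₁) ∧
        (∀ s ∈ Rbar α r, ‖F (s + (h : ℂ)) - F s‖ ≤ ε₂)) := by
  have hstrip : Ici α ×ℂ Icc (-r) r ⊆ U ∪ {z : ℂ | 0 < z.re} :=
    (Ici_reProdIm_subset_Rbar_union hα'.le hr'.le).trans (union_subset_union_left _ hUR)
  refine ⟨fun h hh _ => ⟨fun s hs => hstrip ?_, ?_, fun s hs => ?_⟩, fun ε hε => ?_⟩
  · exact reProdIm_subset_iff.2 (prod_mono Icc_subset_Ici_self le_rfl)
      (add_ofReal_mem_reProdIm (b := 1 + h) hs hh.le le_rfl)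
  · exact hFan.comp (differentiable_id.add_const _).differentiableOn fun s hs => hs
  · rw [Laplace_cexp_neg_mul_mul, hFeq]
    simpa using add_pos hs hh
  have hFK : ContinuousOn F (Icc α 2 ×ℂ Icc (-r) r) := hFan.continuousOn.mono
    ((reProdIm_subset_iff.2 (prod_mono Icc_subset_Ici_self le_rfl)).trans hstrip)
  obtain ⟨h₀, hh₀, hsmall⟩ := mem_nhdsGT_iff_exists_Ioo_subset.1
    ((τ.eventually_norm_deriv_cexp_neg_mul_mul_sub_le (by positivity : 0 < ε / 3)).and
      (eventually_norm_comp_add_ofReal_sub_le hFK (by positivity : 0 < ε / 3)))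
  exact ⟨h₀, hh₀, fun h hh hh₀ => ⟨ε / 3, ε / 3, by positivity, by positivity, by linarith,
    hsmall ⟨hh, hh₀⟩⟩⟩

/-- For a Schwartz function `τ` supported in `[0,∞)` whose Laplace transform has
an analytic extension `F` to (an open neighborhood of `R̄_{α',r'}`) ∪ {Re s > 0},
with `α' < α < 0` and `r' > r > 0`: for `0 < h < α − α'`, `s ↦ F(s+h)` is an
analytic extension of `L{τ_h;·}` (where `τ_h(x) = e^{-hx} τ(x)`) to a
neighborhood of `R̄_{α,r}`, and `‖τ_h − τ‖_{α,r} → 0` as `h → 0⁺`. -/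
theorem exponential_shift_approximation
    (α r α' r' : ℝ) (hα : α < 0) (hr : 0 < r) (hα' : α' < α) (hr' : r < r')
    (τ : SchwartzMap ℝ ℂ) (hsupp : ∀ x : ℝ, x < 0 → τ x = 0)
    (U : Set ℂ) (hU : IsOpen U) (hUR : Rbar α' r' ⊆ U)
    (F : ℂ → ℂ)
    (hFan : DifferentiableOn ℂ F (U ∪ {s : ℂ | 0 < s.re}))
    (hFeq : ∀ s : ℂ, 0 < s.re → F s = Laplace (⇑τ) s) :
    -- (a) `F(·+h)` is an analytic extension of `L{τ_h;·}` near `R̄_{α,r}`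
    (∀ h : ℝ, 0 < h → h < α - α' →
      Rbar α r ⊆ {s : ℂ | s + (h : ℂ) ∈ U ∪ {z : ℂ | 0 < z.re}} ∧
      DifferentiableOn ℂ (fun s : ℂ => F (s + (h : ℂ)))
        {s : ℂ | s + (h : ℂ) ∈ U ∪ {z : ℂ | 0 < z.re}} ∧
      (∀ s : ℂ, 0 < s.re →
        F (s + (h : ℂ)) =
          Laplace (fun x : ℝ => Complex.exp (-((h : ℂ) * (x : ℂ))) * τ x) s)) ∧
    -- (b) `‖τ_h − τ‖_{α,r} → 0` as `h → 0⁺`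
    (∀ ε : ℝ, 0 < ε → ∃ h₀ : ℝ, 0 < h₀ ∧ ∀ h : ℝ, 0 < h → h < h₀ →
      ∃ ε₁ ε₂ : ℝ, 0 ≤ ε₁ ∧ 0 ≤ ε₂ ∧ ε₁ + ε₂ < ε ∧
        (∀ x : ℝ, 0 ≤ x →
          ‖deriv (fun y : ℝ => Complex.exp (-((h : ℂ) * (y : ℂ))) * τ y) x
            - deriv (⇑τ) x‖ ≤ ε₁) ∧
        (∀ s ∈ Rbar α r, ‖F (s + (h : ℂ)) - F s‖ ≤ ε₂)) :=
  exponential_shift_approximation_general α r α' r' hα' hr' τ U hUR F hFan hFeq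
end

section
/- Let L ∈ C¹[0,∞) with L(x) → 0 and L'(x) → 0 as x → ∞, and suppose L{L;·} has an analytic extension to a sector {s ∈ ℂ \ {0} : −π + ϑ < arg s < π − ϑ} for some ϑ ∈ (0, π/2). Fix α < 0 and r > 0, and set L_b(x) = L(x) sin(bx) for b > 0. Then there exists M > 0 such that for every b ≥ M the function L_b belongs to V_{α,r} — i.e., L_b ∈ C¹[0,∞), L_b'(x) → 0, and L{L_b;s} = (1/2i)(L{L;s−ib} − L{L;s+ib}) has analytic extension F_b to R_{α,r} continuous on R̄_{α,r} — and moreover sup_{b∈[M,M+1]} ( sup_{x≥0}|L_b'(x)| + sup_{s∈R̄_{α,r}} |F_b(s)| ) < ∞. -/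
open Filter Set MeasureTheory

/-- The open rectangle `R_{α,r} = {s : α < Re s < 1, |Im s| < r}`. -/
def Ropen (α r : ℝ) : Set ℂ := {s : ℂ | α < s.re ∧ s.re < 1 ∧ |s.im| < r}


/-! For `s ∈ R̄_{α,r}` we have `Re (s ± ib) ≥ α` and `|Im (s ± ib)| ≥ b - r`, while a point `z`
with `Re z ≥ α` lies in the sector `|arg z| < π - ϑ` as soon as `cos ϑ · |Im z| > -α`. So for large
`b` both shifted rectangles `R̄_{α,r} ± ib` lie in the sector where `F` is holomorphic, hence
`F_b(s) = (F(s - ib) - F(s + ib)) / 2i` is complex differentiable on all of `R̄_{α,r}`, and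
continuity of `(b, s) ↦ F_b(s)` on the compact set `[M, M + 1] × R̄_{α,r}` bounds it uniformly.
Being continuous and tending to `0`, `L` and `L'` are bounded, which bounds
`L_b' = L' sin(b·) + b L cos(b·)`. -/

lemma exists_norm_le_of_continuousOn_Ici_of_tendsto {E : Type*} [NormedAddCommGroup E]
    {f : ℝ → E} {a : ℝ} {l : E} (hf : ContinuousOn f (Ici a)) (hl : Tendsto f atTop (nhds l)) :
    ∃ C, ∀ x ∈ Ici a, ‖f x‖ ≤ C := by
  obtain ⟨X, hX⟩ := eventually_atTop.1 (hl.norm.eventually (gt_mem_nhds (lt_add_one ‖l‖)))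
  obtain ⟨C, hC⟩ := isCompact_Icc.exists_bound_of_continuousOn
    (hf.mono (Icc_subset_Ici_self : Icc a X ⊆ Ici a))
  refine ⟨max C (‖l‖ + 1), fun x hx => ?_⟩
  rcases le_total x X with h | h
  · exact (hC x ⟨hx, h⟩).trans (le_max_left _ _)
  · exact (hX x h).le.trans (le_max_right _ _)

lemma HasDerivWithinAt.mul_sin_mul {f : ℝ → ℝ} {f' b x : ℝ} {s : Set ℝ}
    (hf : HasDerivWithinAt f f' s x) :
    HasDerivWithinAt (fun y => f y * Real.sin (b * y))
      (f' * Real.sin (b * x) + b * f x * Real.cos (b * x)) s x :=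
  (hf.mul ((hasDerivAt_id' x).const_mul b).sin.hasDerivWithinAt).congr_deriv (by ring)

lemma abs_mul_sin_add_mul_cos_le (u v θ φ : ℝ) :
    |u * Real.sin θ + v * Real.cos φ| ≤ |u| + |v| :=
  (abs_add_le _ _).trans <| by
    rw [abs_mul, abs_mul]
    exact add_le_add (mul_le_of_le_one_right (abs_nonneg _) (Real.abs_sin_le_one _))
      (mul_le_of_le_one_right (abs_nonneg _) (Real.abs_cos_le_one _))

lemma tendsto_deriv_mul_sin {f f' : ℝ → ℝ} {b : ℝ} (hf : Tendsto f atTop (nhds 0))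
    (hf' : Tendsto f' atTop (nhds 0)) :
    Tendsto (fun x => f' x * Real.sin (b * x) + b * f x * Real.cos (b * x)) atTop (nhds 0) :=
  squeeze_zero_norm (fun x => abs_mul_sin_add_mul_cos_le _ _ _ _)
    (by
      have := hf'.abs.add (hf.const_mul b).abs
      simp only [abs_zero, mul_zero, add_zero] at this
      exact this)

def sector (ϑ : ℝ) : Set ℂ := {s : ℂ | s ≠ 0 ∧ -(Real.pi - ϑ) < s.arg ∧ s.arg < Real.pi - ϑ}

lemma mem_sector_of_neg_cos_mul_norm_lt {ϑ : ℝ} (hϑ : ϑ ≤ Real.pi) {z : ℂ}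
    (h : -(Real.cos ϑ * ‖z‖) < z.re) : z ∈ sector ϑ := by
  have hz : z ≠ 0 := by rintro rfl; simp at h
  have harg : |z.arg| < Real.pi - ϑ := by
    by_contra! hle
    have hcos := Real.cos_le_cos_of_nonneg_of_le_pi (sub_nonneg.2 hϑ) (Complex.abs_arg_le_pi z) hle
    rw [Real.cos_abs, Real.cos_pi_sub, Complex.cos_arg hz, div_le_iff₀ (norm_pos_iff.2 hz)] at hcos
    linarith
  exact ⟨hz, (abs_lt.1 harg).1, (abs_lt.1 harg).2⟩

lemma mem_sector_of_le_re {ϑ α : ℝ} (hϑ : ϑ ≤ Real.pi) (hcos : 0 ≤ Real.cos ϑ) {z : ℂ}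
    (hre : α ≤ z.re) (him : -α < Real.cos ϑ * |z.im|) : z ∈ sector ϑ :=
  mem_sector_of_neg_cos_mul_norm_lt hϑ <| by
    linarith [mul_le_mul_of_nonneg_left (Complex.abs_im_le_norm z) hcos]

lemma sub_mem_sector_and_add_mem_sector {ϑ α r b : ℝ} (hϑ : ϑ ≤ Real.pi)
    (hcos : 0 < Real.cos ϑ) (hb : r - α / Real.cos ϑ < b) {s : ℂ} (hs : s ∈ Rbar α r) :
    s - Complex.I * b ∈ sector ϑ ∧ s + Complex.I * b ∈ sector ϑ := by
  obtain ⟨hre, -, him⟩ := hs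
  rw [abs_le] at him
  have hgap : -α < Real.cos ϑ * (b - r) := by
    rw [← div_lt_iff₀' hcos, neg_div]
    linarith
  have him_sub : (s - Complex.I * b).im = s.im - b := by simp
  have him_add : (s + Complex.I * b).im = s.im + b := by simp
  refine ⟨mem_sector_of_le_re hϑ hcos.le (by simpa using hre) (hgap.trans_le ?_),
    mem_sector_of_le_re hϑ hcos.le (by simpa using hre) (hgap.trans_le ?_)⟩
  · rw [him_sub]
    gcongr
    linarith [neg_abs_le (s.im - b)]
  · rw [him_add]
    gcongr
    linarith [le_abs_self (s.im + b)]

lemma isCompact_rbar (α r : ℝ) : IsCompact (Rbar α r) := by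
  have h : Rbar α r = Icc α 1 ×ℂ Icc (-r) r := by
    ext s
    simp [Rbar, Complex.mem_reProdIm, abs_le, and_assoc]
  rw [h]
  exact isCompact_Icc.reProdIm isCompact_Icc

noncomputable def sinShift (F : ℂ → ℂ) (b : ℝ) (s : ℂ) : ℂ :=
  (1 / (2 * Complex.I)) * (F (s - Complex.I * b) - F (s + Complex.I * b))

lemma DifferentiableOn.sinShift {F : ℂ → ℂ} {S U : Set ℂ} {b : ℝ}
    (hF : DifferentiableOn ℂ F S)
    (hU : ∀ s ∈ U, s - Complex.I * b ∈ S ∧ s + Complex.I * b ∈ S) :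
    DifferentiableOn ℂ (sinShift F b) U :=
  ((hF.comp (differentiableOn_id.sub_const _) fun s hs => (hU s hs).1).sub
    (hF.comp (differentiableOn_id.add_const _) fun s hs => (hU s hs).2)).const_mul _

lemma exists_norm_sinShift_le {F : ℂ → ℂ} {S K : Set ℂ} {a c : ℝ} (hF : ContinuousOn F S)
    (hK : IsCompact K)
    (hU : ∀ b ∈ Icc a c, ∀ s ∈ K, s - Complex.I * b ∈ S ∧ s + Complex.I * b ∈ S) :
    ∃ C, ∀ b ∈ Icc a c, ∀ s ∈ K, ‖sinShift F b s‖ ≤ C := by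
  have hcont : ContinuousOn (fun p : ℝ × ℂ => sinShift F p.1 p.2) (Icc a c ×ˢ K) :=
    continuousOn_const.mul
      ((hF.comp (by fun_prop) fun p hp => (hU _ hp.1 _ hp.2).1).sub
        (hF.comp (by fun_prop) fun p hp => (hU _ hp.1 _ hp.2).2))
  obtain ⟨C, hC⟩ := (isCompact_Icc.prod hK).exists_bound_of_continuousOn hcont
  exact ⟨C, fun b hb s hs => hC (b, s) ⟨hb, hs⟩⟩

lemma integrableOn_mul_exp_neg_mul {g : ℝ → ℂ} {B : ℝ}
    (hg : AEStronglyMeasurable g (volume.restrict (Ioi 0))) (hB : ∀ x ∈ Ioi (0 : ℝ), ‖g x‖ ≤ B)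
    {z : ℂ} (hz : 0 < z.re) :
    IntegrableOn (fun x : ℝ => g x * Complex.exp (-(z * x))) (Ioi 0) := by
  simp_rw [← neg_mul]
  exact (integrableOn_exp_mul_complex_Ioi (by simpa using hz) 0).bdd_mul hg
    ((ae_restrict_iff' measurableSet_Ioi).2 (Eventually.of_forall hB))

lemma ofReal_mul_sin_mul_exp (g b x : ℝ) (s : ℂ) :
    ((g * Real.sin (b * x) : ℝ) : ℂ) * Complex.exp (-(s * x)) =
      1 / (2 * Complex.I) * ((g : ℂ) * Complex.exp (-((s - Complex.I * b) * x)) -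
        (g : ℂ) * Complex.exp (-((s + Complex.I * b) * x))) := by
  rw [show -((s - Complex.I * b) * x) = -(s * x) + b * x * Complex.I by ring,
    show -((s + Complex.I * b) * x) = -(s * x) + -(b * x * Complex.I) by ring,
    Complex.exp_add, Complex.exp_add]
  push_cast
  rw [Complex.sin]
  field_simp
  ring_nf
  rw [Complex.I_sq]
  ring

lemma laplace_mul_sin {g : ℝ → ℝ} {B b : ℝ} {s : ℂ}
    (hg : AEStronglyMeasurable g (volume.restrict (Ioi 0))) (hB : ∀ x ∈ Ioi (0 : ℝ), |g x| ≤ B)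
    (hs : 0 < s.re) :
    Laplace (fun x => ((g x * Real.sin (b * x) : ℝ) : ℂ)) s =
      sinShift (Laplace fun x => (g x : ℂ)) b s := by
  have hgC : AEStronglyMeasurable (fun x => (g x : ℂ)) (volume.restrict (Ioi 0)) :=
    Complex.continuous_ofReal.comp_aestronglyMeasurable hg
  have hBC : ∀ x ∈ Ioi (0 : ℝ), ‖(g x : ℂ)‖ ≤ B := fun x hx => by simpa using hB x hx
  rw [sinShift, Laplace, Laplace, Laplace,
    ← integral_sub (integrableOn_mul_exp_neg_mul hgC hBC (by simpa using hs))
      (integrableOn_mul_exp_neg_mul hgC hBC (by simpa using hs)), ← integral_const_mul]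
  exact integral_congr_ae (Eventually.of_forall fun x => ofReal_mul_sin_mul_exp (g x) b x s)

/-- If `L ∈ C¹[0,∞)` with `L(x) → 0`, `L'(x) → 0` and `L{L;·}` extends
analytically to a sector `{s ≠ 0 : |arg s| < π − ϑ}` with `ϑ ∈ (0,π/2)`, then
for `L_b(x) = L(x) sin(bx)` there is `M > 0` such that `L_b ∈ V_{α,r}` for all
`b ≥ M` — with extension `F_b(s) = (1/2i)(F(s−ib) − F(s+ib))` analytic on
`R_{α,r}` and continuous on `R̄_{α,r}` — and `{‖L_b‖_{α,r} : b ∈ [M,M+1]}` is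
bounded. -/
theorem Lb_in_V_and_bounded
    (L L' : ℝ → ℝ)
    (hC1 : ∀ x ∈ Set.Ici (0 : ℝ), HasDerivWithinAt L (L' x) (Set.Ici 0) x)
    (hcont : ContinuousOn L' (Set.Ici 0))
    (hL : Tendsto L atTop (nhds 0))
    (hL' : Tendsto L' atTop (nhds 0))
    (ϑ : ℝ) (hϑ0 : 0 < ϑ) (hϑπ : ϑ < Real.pi / 2)
    (F : ℂ → ℂ)
    (hFan : DifferentiableOn ℂ F
      {s : ℂ | s ≠ 0 ∧ -(Real.pi - ϑ) < s.arg ∧ s.arg < Real.pi - ϑ})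
    (hFeq : ∀ s : ℂ, 0 < s.re → F s = Laplace (fun x : ℝ => ((L x : ℝ) : ℂ)) s)
    (α r : ℝ) (hα : α < 0) (hr : 0 < r) :
    ∃ M : ℝ, 0 < M ∧
      (∀ b : ℝ, M ≤ b →
        (∀ x ∈ Set.Ici (0 : ℝ),
          HasDerivWithinAt (fun y : ℝ => L y * Real.sin (b * y))
            (L' x * Real.sin (b * x) + b * L x * Real.cos (b * x)) (Set.Ici 0) x) ∧
        ContinuousOn (fun x : ℝ => L' x * Real.sin (b * x) + b * L x * Real.cos (b * x))
          (Set.Ici 0) ∧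
        Tendsto (fun x : ℝ => L' x * Real.sin (b * x) + b * L x * Real.cos (b * x))
          atTop (nhds 0) ∧
        DifferentiableOn ℂ
          (fun s : ℂ => (1 / (2 * Complex.I)) *
            (F (s - Complex.I * (b : ℂ)) - F (s + Complex.I * (b : ℂ)))) (Ropen α r) ∧
        ContinuousOn
          (fun s : ℂ => (1 / (2 * Complex.I)) *
            (F (s - Complex.I * (b : ℂ)) - F (s + Complex.I * (b : ℂ)))) (Rbar α r) ∧
        (∀ s : ℂ, 0 < s.re →
          (1 / (2 * Complex.I)) *
              (F (s - Complex.I * (b : ℂ)) - F (s + Complex.I * (b : ℂ))) =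
            Laplace (fun x : ℝ => ((L x * Real.sin (b * x) : ℝ) : ℂ)) s)) ∧
      ∃ C : ℝ, ∀ b ∈ Set.Icc M (M + 1),
        (∀ x : ℝ, 0 ≤ x → |L' x * Real.sin (b * x) + b * L x * Real.cos (b * x)| ≤ C) ∧
        (∀ s ∈ Rbar α r,
          ‖(1 / (2 * Complex.I)) *
              (F (s - Complex.I * (b : ℂ)) - F (s + Complex.I * (b : ℂ)))‖ ≤ C) := by
  have hLcont : ContinuousOn L (Ici 0) := fun x hx => (hC1 x hx).continuousWithinAt
  obtain ⟨B, hB⟩ := exists_norm_le_of_continuousOn_Ici_of_tendsto hLcont hL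
  obtain ⟨A, hA⟩ := exists_norm_le_of_continuousOn_Ici_of_tendsto hcont hL'
  have hcos : 0 < Real.cos ϑ := Real.cos_pos_of_mem_Ioo ⟨by linarith [Real.pi_pos], hϑπ⟩
  set M := r + 1 - α / Real.cos ϑ
  have hM0 : 0 < M := by linarith [div_neg_of_neg_of_pos hα hcos]
  have hshift : ∀ b, M ≤ b → ∀ s ∈ Rbar α r,
      s - Complex.I * b ∈ sector ϑ ∧ s + Complex.I * b ∈ sector ϑ := fun b hb _ hs =>
    sub_mem_sector_and_add_mem_sector (by linarith [Real.pi_pos]) hcos (by linarith) hs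
  refine ⟨M, hM0, fun b hb => ?_, ?_⟩
  · have hFb : DifferentiableOn ℂ (sinShift F b) (Rbar α r) := hFan.sinShift (hshift b hb)
    refine ⟨fun x hx => (hC1 x hx).mul_sin_mul, by fun_prop, tendsto_deriv_mul_sin hL hL',
      hFb.mono fun s hs => ⟨hs.1.le, hs.2.1.le, hs.2.2.le⟩, hFb.continuousOn, fun s hs => ?_⟩
    rw [laplace_mul_sin ((hLcont.mono Ioi_subset_Ici_self).aestronglyMeasurable measurableSet_Ioi)
      (fun x hx => hB x (Ioi_subset_Ici_self hx)) hs, sinShift,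
      hFeq _ (by simpa using hs), hFeq _ (by simpa using hs)]
  · obtain ⟨C, hC⟩ := exists_norm_sinShift_le hFan.continuousOn (isCompact_rbar α r)
      fun b hb => hshift b hb.1
    refine ⟨max (A + (M + 1) * B) C, fun b hb => ⟨fun x hx => ?_, fun s hs => ?_⟩⟩
    · calc |L' x * Real.sin (b * x) + b * L x * Real.cos (b * x)|
          ≤ |L' x| + |b * L x| := abs_mul_sin_add_mul_cos_le _ _ _ _
        _ ≤ A + (M + 1) * B := by
          rw [abs_mul, abs_of_pos (hM0.trans_le hb.1)]
          exact add_le_add (hA x hx) (mul_le_mul hb.2 (hB x hx) (abs_nonneg _) (by linarith))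
        _ ≤ _ := le_max_left _ _
    · exact (hC b hb s hs).trans (le_max_right _ _)
end
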